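/- In the explicit solution for odd N = 2n−1, after applying the first m terms ∏_{k=1}^{m} S j^{2k-1} s J^{2k} of the solution to the initial configuration B^N O R^N, the resulting configuration is B^{N−2m} O (RB)^{2m} R^{N−2m}, for all 0 ≤ m ≤ n−1. -/
import Mathlib


/-- A cell of the puzzle: a blue peg, a red peg, or an empty hole. -/
inductive Cell
  | B : Cell
  | R : Cell
  | O : Cell
  deriving DecidableEq

open Cell

/-- The four kinds of moves appearing in the explicit solution:
`S` = blue peg steps right, `s` = red peg steps left,
`J` = blue peg jumps right, `j` = red peg jumps left. -/
inductive Letter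
  | S : Letter
  | s : Letter
  | J : Letter
  | j : Letter
  deriving DecidableEq

/-- `MoveRel l c d` : performing move `l` transforms configuration `c` into `d`.
Jumps are over a single adjacent peg into the empty hole. -/
def MoveRel : Letter → List Cell → List Cell → Prop
  | .S, c, d => ∃ x y, c = x ++ B :: O :: y ∧ d = x ++ O :: B :: y
  | .s, c, d => ∃ x y, c = x ++ O :: R :: y ∧ d = x ++ R :: O :: y
  | .J, c, d => ∃ x y p, p ≠ O ∧ c = x ++ B :: p :: O :: y ∧ d = x ++ O :: p :: B :: y
  | .j, c, d => ∃ x y p, p ≠ O ∧ c = x ++ O :: p :: R :: y ∧ d = x ++ R :: p :: O :: y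

/-- `Plays w c d` : the sequence of moves `w`, each legal from the current
configuration, transforms `c` into `d`. -/
def Plays : List Letter → List Cell → List Cell → Prop
  | [], c, d => c = d
  | l :: ls, c, d => ∃ e, MoveRel l c e ∧ Plays ls e d

/-- Initial configuration `BᴺORᴺ`. -/
def startCfg (N : ℕ) : List Cell := List.replicate N B ++ O :: List.replicate N R

/-- Final configuration `RᴺOBᴺ`. -/
def finishCfg (N : ℕ) : List Cell := List.replicate N R ++ O :: List.replicate N B

/-- The first `m` terms `∏_{k=1}^{m} S j^{2k-1} s J^{2k}` of the explicit
solution for odd `N`. -/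
def prefixSeq (m : ℕ) : List Letter :=
  ((List.range m).map (fun k =>
      Letter.S :: (List.replicate (2 * (k + 1) - 1) Letter.j ++
        Letter.s :: List.replicate (2 * (k + 1)) Letter.J))).flatten

def Pk (k : ℕ) : List Cell := (List.replicate k ([R, B] : List Cell)).flatten
def Qk (k : ℕ) : List Cell := (List.replicate k ([B, R] : List Cell)).flatten

lemma Pk_succ (k : ℕ) : Pk (k + 1) = R :: B :: Pk k := by
  simp [Pk, List.replicate_succ]

lemma Qk_succ (k : ℕ) : Qk (k + 1) = B :: R :: Qk k := by
  simp [Qk, List.replicate_succ]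

lemma Pk_succ' (k : ℕ) : Pk (k + 1) = Pk k ++ [R, B] := by
  simp [Pk, List.replicate_succ']

lemma plays_append {u v : List Letter} {c d e : List Cell}
    (h1 : Plays u c d) (h2 : Plays v d e) : Plays (u ++ v) c e := by
  induction u generalizing c with
  | nil => cases h1; simpa using h2
  | cons l ls ih =>
    obtain ⟨f, hf, hfs⟩ := h1
    exact ⟨f, hf, ih hfs⟩

lemma jchain (i : ℕ) (x y : List Cell) :
    Plays (List.replicate i Letter.j) (x ++ O :: (Qk i ++ y)) (x ++ (Pk i ++ O :: y)) := by
  induction i generalizing x with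
  | zero => simp [Plays, Pk, Qk]
  | succ i ih =>
    rw [List.replicate_succ]
    refine ⟨x ++ R :: B :: O :: (Qk i ++ y), ⟨x, Qk i ++ y, B, by simp, ?_, by simp⟩, ?_⟩
    · simp [Qk_succ]
    · have := ih (x ++ [R, B])
      simpa [Pk_succ] using this

lemma Jchain (i : ℕ) (x y : List Cell) :
    Plays (List.replicate i Letter.J) (x ++ (Pk i ++ R :: O :: y)) (x ++ R :: O :: (Pk i ++ y)) := by
  induction i generalizing y with
  | zero => simp [Plays, Pk]
  | succ i ih =>
    rw [List.replicate_succ]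
    refine ⟨x ++ (Pk i ++ R :: O :: (R :: B :: y)), ⟨x ++ Pk i ++ [R], y, R, by simp, ?_, by simp⟩, ?_⟩
    · simp [Pk_succ']
    · have := ih (R :: B :: y)
      simpa [Pk_succ'] using this

lemma BRshift (t : ℕ) (z : List Cell) : B :: (Pk t ++ R :: z) = Qk (t + 1) ++ z := by
  induction t generalizing z with
  | zero => simp [Pk, Qk]
  | succ t ih =>
    rw [Pk_succ, Qk_succ]
    simp only [List.cons_append]
    rw [show Qk (t+1) = B :: R :: Qk t from Qk_succ t] at ih ⊢
    have := ih z
    simp only [List.cons_append] at this ⊢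
    rw [← this]

lemma blockLemma (t b : ℕ) :
    Plays (Letter.S :: (List.replicate (t + 1) Letter.j ++
        Letter.s :: List.replicate (t + 2) Letter.J))
      (List.replicate (b + 3) B ++ O :: (Pk t ++ List.replicate (b + 3) R))
      (List.replicate (b + 1) B ++ O :: (Pk (t + 2) ++ List.replicate (b + 1) R)) := by
  -- step S
  refine ⟨List.replicate (b + 2) B ++ O :: (Qk (t + 1) ++ List.replicate (b + 2) R),
    ⟨List.replicate (b + 2) B, Pk t ++ List.replicate (b + 3) R, ?_, ?_⟩, ?_⟩
  · simp [List.replicate_succ' (n := b + 2)]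
  · rw [← BRshift t (List.replicate (b + 2) R)]
    simp [List.replicate_succ (n := b + 2)]
  -- j chain
  refine plays_append (jchain (t + 1) (List.replicate (b + 2) B) (List.replicate (b + 2) R)) ?_
  -- step s
  refine ⟨List.replicate (b + 2) B ++ (Pk (t + 1) ++ R :: O :: List.replicate (b + 1) R),
    ⟨List.replicate (b + 2) B ++ Pk (t + 1), List.replicate (b + 1) R, ?_, by simp⟩, ?_⟩
  · simp [List.replicate_succ (n := b + 1)]
  -- J chain: replicate (t+2) J = replicate (t+1) J ++ [J]
  rw [show t + 2 = (t + 1) + 1 from rfl, List.replicate_succ' (n := t + 1)]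
  refine plays_append (Jchain (t + 1) (List.replicate (b + 2) B) (List.replicate (b + 1) R)) ?_
  -- final J
  refine ⟨_, ⟨List.replicate (b + 1) B, Pk (t + 1) ++ List.replicate (b + 1) R, R, by simp, ?_, rfl⟩, ?_⟩
  · simp [List.replicate_succ' (n := b + 1)]
  · simp [Plays, Pk_succ]

lemma prefixSeq_succ (m : ℕ) :
    prefixSeq (m + 1) = prefixSeq m ++
      (Letter.S :: (List.replicate (2 * (m + 1) - 1) Letter.j ++
        Letter.s :: List.replicate (2 * (m + 1)) Letter.J)) := by
  simp [prefixSeq, List.range_succ]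

/-- In the explicit solution for odd `N = 2n - 1`, after applying the first
`m` terms `∏_{k=1}^{m} S j^{2k-1} s J^{2k}` (all moves being legal) to the
initial configuration `BᴺORᴺ`, the resulting configuration is
`B^{N-2m} O (RB)^{2m} R^{N-2m}`, for all `0 ≤ m ≤ n - 1`. -/
theorem prefix_configuration (n m : ℕ) (hn : 1 ≤ n) (hm : m ≤ n - 1) :
    Plays (prefixSeq m) (startCfg (2 * n - 1))
      (List.replicate (2 * n - 1 - 2 * m) B ++
        O :: ((List.replicate (2 * m) [R, B]).flatten ++
          List.replicate (2 * n - 1 - 2 * m) R)) := by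
  induction m with
  | zero => simp [prefixSeq, Plays, startCfg]
  | succ m ih =>
    have hm' : m ≤ n - 1 := by omega
    obtain ⟨b, hb⟩ : ∃ b, 2 * n - 1 - 2 * m = b + 3 := ⟨2 * n - 1 - 2 * m - 3, by omega⟩
    have hb' : 2 * n - 1 - 2 * (m + 1) = b + 1 := by omega
    rw [prefixSeq_succ, hb']
    refine plays_append (ih hm') ?_
    rw [hb]
    have := blockLemma (2 * m) b
    have h1 : 2 * (m + 1) - 1 = 2 * m + 1 := by omega
    have h2 : 2 * (m + 1) = 2 * m + 2 := by omega
    rw [h1, h2]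
    simpa [Pk, h2] using this
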